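/- Let (X, μ) be a measure space, let φ, φ₁ : X → ℝ be measurable functions, and let p > 0 be a real number. If the function x ↦ exp(2φ₁(x) − 2(1 + 1/p)·φ(x)) is integrable with respect to μ, then the (nonnegative) function x ↦ exp(−2φ(x)) − exp(−2·max(φ(x), p·φ₁(x))) is integrable with respect to μ, and ∫_X (exp(−2φ) − exp(−2·max(φ, p·φ₁))) dμ ≤ ∫_X exp(2φ₁ − 2(1 + 1/p)·φ) dμ. -/

import Mathlib

open MeasureTheory Real

/-- Where `a < p * b` we have `a / p ≤ b`; elsewhere the left-hand side vanishes. -/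
theorem exp_neg_mul_sub_exp_neg_mul_max_le {t p : ℝ} (ht : 0 ≤ t) (hp : 0 < p) (a b : ℝ) :
    exp (-t * a) - exp (-t * max a (p * b)) ≤ exp (t * b - t * (1 + 1 / p) * a) := by
  rcases le_or_gt (p * b) a with hle | hlt
  · rw [max_eq_left hle, sub_self]
    positivity
  · have hab : 0 ≤ b - a / p := sub_nonneg.mpr ((div_le_iff₀' hp).mpr hlt.le)
    calc exp (-t * a) - exp (-t * max a (p * b)) ≤ exp (-t * a) :=
          sub_le_self _ (exp_pos _).le
      _ ≤ exp (-t * a + t * (b - a / p)) := by gcongr; exact le_add_of_nonneg_right (by positivity)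
      _ = exp (t * b - t * (1 + 1 / p) * a) := by ring_nf

theorem exp_neg_mul_sub_exp_neg_mul_max_nonneg {t : ℝ} (ht : 0 ≤ t) (a c : ℝ) :
    0 ≤ exp (-t * a) - exp (-t * max a c) := by
  rw [sub_nonneg, exp_le_exp, neg_mul, neg_mul, neg_le_neg_iff]
  gcongr
  exact le_max_left a c

theorem integrable_and_integral_le_of_nonneg_of_le {X : Type*} [MeasurableSpace X] {μ : Measure X} {f g : X → ℝ}
    (hf : AEStronglyMeasurable f μ) (hg : Integrable g μ) (hf₀ : ∀ x, 0 ≤ f x)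
    (hfg : ∀ x, f x ≤ g x) : Integrable f μ ∧ ∫ x, f x ∂μ ≤ ∫ x, g x ∂μ := by
  have hfi : Integrable f μ :=
    hg.mono' hf (.of_forall fun x => (Real.norm_of_nonneg (hf₀ x)).trans_le (hfg x))
  exact ⟨hfi, integral_mono hfi hg hfg⟩

theorem integrable_exp_max_estimate {X : Type*} [MeasurableSpace X] (μ : Measure X)
    (φ φ₁ : X → ℝ) (hφ : Measurable φ) (hφ₁ : Measurable φ₁)
    (p : ℝ) (hp : 0 < p)
    (hint : Integrable (fun x => Real.exp (2 * φ₁ x - 2 * (1 + 1 / p) * φ x)) μ) :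
    Integrable (fun x => Real.exp (-2 * φ x) - Real.exp (-2 * max (φ x) (p * φ₁ x))) μ ∧
      ∫ x, (Real.exp (-2 * φ x) - Real.exp (-2 * max (φ x) (p * φ₁ x))) ∂μ ≤
        ∫ x, Real.exp (2 * φ₁ x - 2 * (1 + 1 / p) * φ x) ∂μ := by
  refine integrable_and_integral_le_of_nonneg_of_le ?_ hint
    (fun x => exp_neg_mul_sub_exp_neg_mul_max_nonneg zero_le_two _ _)
    (fun x => exp_neg_mul_sub_exp_neg_mul_max_le zero_le_two hp _ _)
  fun_prop
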